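/- arXiv:1505.02718 — 2 statements merged into one kernel-verified Lean document; each statement's English description precedes it below -/
import Mathlib

section
/- Let H be a real Hilbert space, I = {1,...,n}, μ > 0, and for each i ∈ I let λ_i > 0 with Σ_{i∈I} λ_i = 1 and let A_i : H ⇉ H be maximally monotone. Let x and u be points in H. If ⋂_{i∈I} A_i(x) ≠ ∅, then R_μ(A, λ)(x) = ⋂_{i∈I} A_i(x). If ⋂_{i∈I} A_i⁻¹(u) ≠ ∅, then (R_μ(A, λ))⁻¹(u) = ⋂_{i∈I} A_i⁻¹(u). -/
open RealInnerProductSpace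

namespace SVP

variable {H : Type*} [NormedAddCommGroup H] [InnerProductSpace ℝ H]

/-- Inverse of a set-valued mapping: `x ∈ inv A u ↔ u ∈ A x`. -/
def inv (A : H → Set H) : H → Set H := fun u => {x | u ∈ A x}

/-- Pointwise (Minkowski) sum of two set-valued mappings. -/
def add (A B : H → Set H) : H → Set H := fun x => {w | ∃ u ∈ A x, ∃ v ∈ B x, w = u + v}

/-- Pointwise difference of two set-valued mappings. -/
def sub (A B : H → Set H) : H → Set H := fun x => {w | ∃ u ∈ A x, ∃ v ∈ B x, w = u - v}

/-- Pointwise scalar multiple of a set-valued mapping. -/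
def smul (c : ℝ) (A : H → Set H) : H → Set H := fun x => (fun u => c • u) '' A x

/-- The identity as a set-valued mapping. -/
def id' : H → Set H := fun x => {x}

/-- Composition of set-valued mappings: `(comp A B) x = ⋃ y ∈ B x, A y`. -/
def comp (A B : H → Set H) : H → Set H := fun x => ⋃ y ∈ B x, A y

/-- Weighted pointwise (Minkowski) combination `Σ_i lam i • (B i)`. -/
def lcomb {n : ℕ} (lam : Fin n → ℝ) (B : Fin n → H → Set H) : H → Set H :=
  fun x => {u | ∃ v : Fin n → H, (∀ i, v i ∈ B i x) ∧ u = ∑ i, lam i • v i}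

/-- The `λ`-weighted resolvent average with parameter `μ`:
`R_μ(A, λ) = (Σ_i λ_i (A_i + μ⁻¹ Id)⁻¹)⁻¹ − μ⁻¹ Id`. -/
def resAvg {n : ℕ} (μ : ℝ) (lam : Fin n → ℝ) (A : Fin n → H → Set H) : H → Set H :=
  sub (inv (lcomb lam (fun i => inv (add (A i) (smul μ⁻¹ id'))))) (smul μ⁻¹ id')

/-- Monotonicity of a set-valued mapping. -/
def IsMonotone (A : H → Set H) : Prop :=
  ∀ ⦃x y u v : H⦄, u ∈ A x → v ∈ A y → 0 ≤ ⟪x - y, u - v⟫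

/-- Maximal monotonicity: the graph is not properly contained in the graph of
another monotone mapping. -/
def IsMaxMonotone (A : H → Set H) : Prop :=
  IsMonotone A ∧ ∀ B : H → Set H, IsMonotone B → (∀ x, A x ⊆ B x) → ∀ x, B x ⊆ A x

/-- Domain of a set-valued mapping. -/
def dom (A : H → Set H) : Set H := {x | (A x).Nonempty}

/-- Range of a set-valued mapping. -/
def ran (A : H → Set H) : Set H := {u | ∃ x, u ∈ A x}

/-- Graph of a set-valued mapping. -/
def graph (A : H → Set H) : Set (H × H) := {p | p.2 ∈ A p.1}

end SVP

variable {H : Type*} [NormedAddCommGroup H] [InnerProductSpace ℝ H] [CompleteSpace H]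

/-!
Write `w ∈ R_μ(A, λ) x` as `x = Σᵢ λᵢ vᵢ` with `w + μ⁻¹ (x - vᵢ) ∈ Aᵢ vᵢ`. Testing monotonicity
of each `Aᵢ` against a common graph point `(y, u')` with `⟪x - y, w - u'⟫ ≤ 0` (which holds when
`y = x` or `u' = w`) gives `μ⁻¹ ‖vᵢ - x‖² ≤ ⟪vᵢ - x, c⟫` with `c = (w - u') - μ⁻¹ (x - y)`
independent of `i`; averaging with the weights `λᵢ` kills the right-hand side, so every `vᵢ = x`,
i.e. `w ∈ Aᵢ x` for all `i`.
-/

section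

variable {E : Type*} [NormedAddCommGroup E] [InnerProductSpace ℝ E]

theorem eq_of_sum_smul_sub_eq_zero_of_norm_sq_le_inner {ι : Type*} [Fintype ι] {lam : ι → ℝ}
    (hpos : ∀ i, 0 < lam i) {v : ι → E} {x : E} (hmean : ∑ i, lam i • (v i - x) = 0)
    {t : ℝ} (ht : 0 < t) {c : E} (hle : ∀ i, t * ‖v i - x‖ ^ 2 ≤ ⟪v i - x, c⟫) (i : ι) :
    v i = x := by
  have hnonneg : ∀ j ∈ Finset.univ, 0 ≤ lam j * (t * ‖v j - x‖ ^ 2) := fun j _ => by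
    have := hpos j
    positivity
  have hsum_le : ∑ j, lam j * (t * ‖v j - x‖ ^ 2) ≤ 0 :=
    calc ∑ j, lam j * (t * ‖v j - x‖ ^ 2)
        ≤ ∑ j, lam j * ⟪v j - x, c⟫ :=
          Finset.sum_le_sum fun j _ => mul_le_mul_of_nonneg_left (hle j) (hpos j).le
      _ = ⟪∑ j, lam j • (v j - x), c⟫ := by simp only [sum_inner, real_inner_smul_left]
      _ = 0 := by rw [hmean, inner_zero_left]
  have hi := (Finset.sum_eq_zero_iff_of_nonneg hnonneg).mp
    (le_antisymm hsum_le (Finset.sum_nonneg hnonneg)) i (Finset.mem_univ i)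
  simpa [(hpos i).ne', ht.ne', sub_eq_zero] using hi

namespace SVP

theorem mem_resAvg_iff {n : ℕ} (μ : ℝ) (lam : Fin n → ℝ) (A : Fin n → E → Set E) (x w : E) :
    w ∈ resAvg μ lam A x ↔
      ∃ v : Fin n → E, x = ∑ i, lam i • v i ∧ ∀ i, w + μ⁻¹ • (x - v i) ∈ A i (v i) := by
  simp only [resAvg, sub, inv, lcomb, add, smul, id', Set.image_singleton,
    Set.mem_singleton_iff, Set.mem_ofPred_eq, exists_eq_left]
  constructor
  · rintro ⟨p, ⟨v, hv, hx⟩, rfl⟩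
    refine ⟨v, hx, fun i => ?_⟩
    obtain ⟨a, ha, hp⟩ := hv i
    convert ha using 1
    rw [smul_sub, ← sub_add_cancel p (μ⁻¹ • v i), hp]
    abel
  · rintro ⟨v, hx, hv⟩
    exact ⟨w + μ⁻¹ • x, ⟨v, fun i => ⟨_, hv i, by rw [smul_sub]; abel⟩, hx⟩, by abel⟩

theorem mem_resAvg_of_forall_mem {n : ℕ} {μ : ℝ} {lam : Fin n → ℝ} (hsum : ∑ i, lam i = 1)
    {A : Fin n → E → Set E} {x w : E} (hw : ∀ i, w ∈ A i x) : w ∈ resAvg μ lam A x :=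
  (mem_resAvg_iff μ lam A x w).mpr
    ⟨fun _ => x, by rw [← Finset.sum_smul, hsum, one_smul], fun i => by simpa using hw i⟩

theorem mem_of_mem_resAvg {n : ℕ} {μ : ℝ} (hμ : 0 < μ) {lam : Fin n → ℝ}
    (hpos : ∀ i, 0 < lam i) (hsum : ∑ i, lam i = 1) {A : Fin n → E → Set E}
    (hmono : ∀ i, IsMonotone (A i)) {x y w u' : E} (hy : ∀ i, u' ∈ A i y)
    (hxy : ⟪x - y, w - u'⟫ ≤ 0) (hw : w ∈ resAvg μ lam A x) (i : Fin n) : w ∈ A i x := by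
  obtain ⟨v, hx, hv⟩ := (mem_resAvg_iff μ lam A x w).mp hw
  have hmean : ∑ j, lam j • (v j - x) = 0 := by
    simp only [smul_sub, Finset.sum_sub_distrib, ← Finset.sum_smul, hsum, one_smul, ← hx,
      sub_self]
  have hle : ∀ j, μ⁻¹ * ‖v j - x‖ ^ 2 ≤ ⟪v j - x, (w - u') - μ⁻¹ • (x - y)⟫ := by
    intro j
    have hm := hmono j (hv j) (hy j)
    have hsplit : v j - y = (v j - x) + (x - y) := by abel
    have hgap : w + μ⁻¹ • (x - v j) - u' = (w - u') - μ⁻¹ • (v j - x) := by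
      rw [← neg_sub (v j) x, smul_neg]
      abel
    rw [hsplit, hgap] at hm
    set d := v j - x
    set e := x - y
    set c := w - u'
    have hexp : ⟪d + e, c - μ⁻¹ • d⟫ = ⟪d, c⟫ - μ⁻¹ * ‖d‖ ^ 2 + ⟪e, c⟫ - μ⁻¹ * ⟪d, e⟫ := by
      simp only [inner_add_left, inner_sub_right, real_inner_smul_right,
        real_inner_self_eq_norm_sq, real_inner_comm e d]
      ring
    rw [hexp] at hm
    rw [inner_sub_right, real_inner_smul_right]
    linarith
  have hvi := eq_of_sum_smul_sub_eq_zero_of_norm_sq_le_inner hpos hmean (inv_pos.mpr hμ) hle i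
  simpa [hvi] using hv i

end SVP

end

theorem stmt3_general {n : ℕ} {μ : ℝ} (hμ : 0 < μ) (lam : Fin n → ℝ)
    (hpos : ∀ i, 0 < lam i) (hsum : ∑ i, lam i = 1) (A : Fin n → H → Set H)
    (hA : ∀ i, SVP.IsMaxMonotone (A i)) (x u : H) :
    ((⋂ i, A i x).Nonempty → SVP.resAvg μ lam A x = ⋂ i, A i x) ∧
    ((⋂ i, SVP.inv (A i) u).Nonempty →
      SVP.inv (SVP.resAvg μ lam A) u = ⋂ i, SVP.inv (A i) u) := by
  have hmono : ∀ i, SVP.IsMonotone (A i) := fun i => (hA i).1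
  constructor
  · rintro ⟨u₀, hu₀⟩
    have hu₀' : ∀ i, u₀ ∈ A i x := Set.mem_iInter.mp hu₀
    ext w
    refine ⟨fun hw => Set.mem_iInter.mpr fun i => ?_,
      fun hw => SVP.mem_resAvg_of_forall_mem hsum (Set.mem_iInter.mp hw)⟩
    exact SVP.mem_of_mem_resAvg hμ hpos hsum hmono hu₀' (by rw [sub_self, inner_zero_left]) hw i
  · rintro ⟨x₀, hx₀⟩
    have hx₀' : ∀ i, u ∈ A i x₀ := fun i => Set.mem_iInter.mp hx₀ i
    ext y
    refine ⟨fun hy => Set.mem_iInter.mpr fun i => ?_,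
      fun hy => SVP.mem_resAvg_of_forall_mem hsum fun i => Set.mem_iInter.mp hy i⟩
    exact SVP.mem_of_mem_resAvg hμ hpos hsum hmono hx₀' (by rw [sub_self, inner_zero_right]) hy i

/-- Common solutions to monotone inclusions: if `⋂ᵢ Aᵢ x ≠ ∅` then
`R_μ(A,λ) x = ⋂ᵢ Aᵢ x`, and if `⋂ᵢ Aᵢ⁻¹ u ≠ ∅` then `(R_μ(A,λ))⁻¹ u = ⋂ᵢ Aᵢ⁻¹ u`. -/
theorem stmt3 {n : ℕ} (hn : 0 < n) {μ : ℝ} (hμ : 0 < μ) (lam : Fin n → ℝ)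
    (hpos : ∀ i, 0 < lam i) (hsum : ∑ i, lam i = 1) (A : Fin n → H → Set H)
    (hA : ∀ i, SVP.IsMaxMonotone (A i)) (x u : H) :
    ((⋂ i, A i x).Nonempty → SVP.resAvg μ lam A x = ⋂ i, A i x) ∧
    ((⋂ i, SVP.inv (A i) u).Nonempty →
      SVP.inv (SVP.resAvg μ lam A) u = ⋂ i, SVP.inv (A i) u) :=
  stmt3_general hμ lam hpos hsum A hA x u
end

section
/- Let H be a real Hilbert space, I = {1,...,n}, μ > 0, and for each i ∈ I let λ_i > 0 with Σ_{i∈I} λ_i = 1 and let A_i : H ⇉ H be maximally monotone and paramonotone. Then R_μ(A, λ) is paramonotone. -/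
open RealInnerProductSpace

variable {H : Type*} [NormedAddCommGroup H] [InnerProductSpace ℝ H] [CompleteSpace H]

/-- A monotone mapping `A` is paramonotone if whenever `(x, v), (y, u) ∈ gra A`
and `⟪x − y, v − u⟫ = 0`, then also `(x, u), (y, v) ∈ gra A`. -/
def Paramonotone (A : H → Set H) : Prop :=
  ∀ ⦃x y v u : H⦄, v ∈ A x → u ∈ A y → ⟪x - y, v - u⟫ = 0 → u ∈ A x ∧ v ∈ A y

/-! A point `v ∈ R_μ(A, λ) x` comes with `pᵢ` such that `x = ∑ λᵢ pᵢ` and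
`v + μ⁻¹ (x - pᵢ) ∈ Aᵢ pᵢ`. For two such points, with `dᵢ = pᵢ - qᵢ` and `m = x - y = ∑ λᵢ dᵢ`,
the `λ`-average of the monotonicity inequalities of the `Aᵢ` equals
`⟪m, v - u⟫ - μ⁻¹ ∑ λᵢ ‖dᵢ - m‖²`. If `⟪m, v - u⟫ = 0`, every `dᵢ` is therefore `m`, each
inequality is an equality, and paramonotonicity of the `Aᵢ` swaps the pairs. -/

section

variable {E : Type*} [NormedAddCommGroup E] [InnerProductSpace ℝ E]

theorem SVP.mem_resAvg_iff_s17 {n : ℕ} (μ : ℝ) (lam : Fin n → ℝ) (A : Fin n → E → Set E)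
    (x w : E) :
    w ∈ SVP.resAvg μ lam A x ↔
      ∃ p : Fin n → E, (∀ i, w + μ⁻¹ • (x - p i) ∈ A i (p i)) ∧ x = ∑ i, lam i • p i := by
  simp only [SVP.resAvg, SVP.sub, SVP.inv, SVP.add, SVP.smul, SVP.id', SVP.lcomb,
    Set.mem_ofPred_eq, Set.image_singleton, Set.mem_singleton_iff, smul_sub]
  constructor
  · rintro ⟨u, ⟨p, hp, hx⟩, _, rfl, rfl⟩
    refine ⟨p, fun i => ?_, hx⟩
    obtain ⟨a, ha, _, rfl, hu⟩ := hp i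
    convert ha using 1
    rw [hu]
    abel
  · rintro ⟨p, hp, hx⟩
    exact ⟨w + μ⁻¹ • x, ⟨p, fun i => ⟨_, hp i, _, rfl, by abel⟩, hx⟩, _, rfl, by abel⟩

theorem sum_mul_norm_sub_sum_smul_sq {ι : Type*} [Fintype ι] (w : ι → ℝ) (hw : ∑ i, w i = 1)
    (d : ι → E) :
    ∑ i, w i * ‖d i - ∑ j, w j • d j‖ ^ 2 = ∑ i, w i * ‖d i‖ ^ 2 - ‖∑ j, w j • d j‖ ^ 2 := by
  set m := ∑ j, w j • d j
  have hm : ∑ i, w i * ⟪d i, m⟫ = ‖m‖ ^ 2 := by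
    simp only [← real_inner_smul_left, ← sum_inner, m, real_inner_self_eq_norm_sq]
  simp only [norm_sub_sq_real, mul_add, mul_sub, Finset.sum_add_distrib, Finset.sum_sub_distrib,
    ← Finset.sum_mul, hw]
  simp only [mul_left_comm _ (2 : ℝ), ← Finset.mul_sum, hm]
  ring

theorem eq_sum_smul_of_inner_sub_smul_nonneg {ι : Type*} [Fintype ι] {w : ι → ℝ}
    (hpos : ∀ i, 0 < w i) (hw : ∑ i, w i = 1) {t : ℝ} (ht : 0 < t) {d : ι → E} {c : E}
    (horth : ⟪∑ j, w j • d j, c - t • ∑ j, w j • d j⟫ = 0)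
    (hmono : ∀ i, 0 ≤ ⟪d i, c - t • d i⟫) (i : ι) :
    d i = ∑ j, w j • d j := by
  set m := ∑ j, w j • d j
  have hsum : ∑ j, w j * ⟪d j, c - t • d j⟫ = -t * ∑ j, w j * ‖d j - m‖ ^ 2 := by
    have hc : ∑ j, w j * ⟪d j, c⟫ = t * ‖m‖ ^ 2 := by
      rw [inner_sub_right, real_inner_smul_right, real_inner_self_eq_norm_sq, sub_eq_zero] at horth
      simp only [← real_inner_smul_left, ← sum_inner, m, horth]
    simp only [inner_sub_right, real_inner_smul_right, real_inner_self_eq_norm_sq, mul_sub,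
      Finset.sum_sub_distrib, hc, sum_mul_norm_sub_sum_smul_sq w hw d, m]
    simp only [mul_left_comm _ t, ← Finset.mul_sum]
    ring
  have hvar : ∑ j, w j * ‖d j - m‖ ^ 2 = 0 := by
    have hle : 0 ≤ ∑ j, w j * ⟪d j, c - t • d j⟫ :=
      Finset.sum_nonneg fun j _ => mul_nonneg (hpos j).le (hmono j)
    have hge : 0 ≤ ∑ j, w j * ‖d j - m‖ ^ 2 :=
      Finset.sum_nonneg fun j _ => mul_nonneg (hpos j).le (sq_nonneg _)
    nlinarith
  have hi := (Finset.sum_eq_zero_iff_of_nonneg fun j _ =>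
    mul_nonneg (hpos j).le (sq_nonneg _)).1 hvar i (Finset.mem_univ i)
  simpa [(hpos i).ne', sub_eq_zero] using hi

end

theorem stmt17_general {n : ℕ} {μ : ℝ} (hμ : 0 < μ) (lam : Fin n → ℝ)
    (hpos : ∀ i, 0 < lam i) (hsum : ∑ i, lam i = 1) (A : Fin n → H → Set H)
    (hA : ∀ i, SVP.IsMaxMonotone (A i)) (hpara : ∀ i, Paramonotone (A i)) :
    Paramonotone (SVP.resAvg μ lam A) := by
  intro x y v u hv hu horth
  obtain ⟨p, hp, hx⟩ := (SVP.mem_resAvg_iff_s17 μ lam A x v).1 hv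
  obtain ⟨q, hq, hy⟩ := (SVP.mem_resAvg_iff_s17 μ lam A y u).1 hu
  have hresidual : ∀ i, (v + μ⁻¹ • (x - p i)) - (u + μ⁻¹ • (y - q i))
      = ((v - u) + μ⁻¹ • (x - y)) - μ⁻¹ • (p i - q i) := fun i => by
    simp only [smul_sub]; abel
  have hmean : ∑ j, lam j • (p j - q j) = x - y := by
    simp only [smul_sub, Finset.sum_sub_distrib, hx, hy]
  have hshift : ∀ i, p i - q i = x - y := by
    rw [← hmean]
    refine eq_sum_smul_of_inner_sub_smul_nonneg (c := (v - u) + μ⁻¹ • (x - y)) hpos hsum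
      (inv_pos.2 hμ) ?_ fun j => ?_
    · rw [hmean, add_sub_cancel_right]; exact horth
    · rw [← hresidual]; exact (hA j).1 (hp j) (hq j)
  have hsame : ∀ i, x - p i = y - q i := fun i => by
    rw [sub_eq_sub_iff_sub_eq_sub, hshift]
  have hswap : ∀ i, u + μ⁻¹ • (y - q i) ∈ A i (p i) ∧ v + μ⁻¹ • (x - p i) ∈ A i (q i) :=
    fun i => hpara i (hp i) (hq i) (by rw [hresidual, hshift, add_sub_cancel_right]; exact horth)
  refine ⟨(SVP.mem_resAvg_iff_s17 μ lam A x u).2 ⟨p, fun i => ?_, hx⟩,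
    (SVP.mem_resAvg_iff_s17 μ lam A y v).2 ⟨q, fun i => ?_, hy⟩⟩
  · rw [hsame]; exact (hswap i).1
  · rw [← hsame]; exact (hswap i).2

/-- Paramonotonicity is recessive: if every `Aᵢ` is maximally monotone and
paramonotone, then `R_μ(A, λ)` is paramonotone. -/
theorem stmt17 {n : ℕ} (hn : 0 < n) {μ : ℝ} (hμ : 0 < μ) (lam : Fin n → ℝ)
    (hpos : ∀ i, 0 < lam i) (hsum : ∑ i, lam i = 1) (A : Fin n → H → Set H)
    (hA : ∀ i, SVP.IsMaxMonotone (A i)) (hpara : ∀ i, Paramonotone (A i)) :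
    Paramonotone (SVP.resAvg μ lam A) :=
  stmt17_general hμ lam hpos hsum A hA hpara
end
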